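/- For exchangeable, almost surely distinct random variables S_1, ..., S_{n+1}, and q̂ defined as the ⌈(n+1)(1-α)⌉-th smallest among S_1,...,S_n (assuming ⌈(n+1)(1-α)⌉ ≤ n), the coverage satisfies the upper bound P(S_{n+1} ≤ q̂) ≤ 1 - α + 1/(n+1). -/

import Mathlib

open MeasureTheory

/-- The `k`-th smallest value (1-indexed) among `f 0, ..., f (n-1)`. -/
noncomputable def orderStat {n : ℕ} (f : Fin n → ℝ) (k : ℕ) : ℝ :=
  (List.insertionSort (· ≤ ·) (List.ofFn f)).getD (k - 1) 0

/-!
With `k = ⌈(n+1)(1-α)⌉`, the event `S_{n+1} ≤ q̂` says exactly that fewer than `k` scores lie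
strictly below `S_{n+1}`. By exchangeability every score has the same probability of having
fewer than `k` scores below it, and when the scores are distinct at most `k` of them can, so
`(n+1) P(S_{n+1} ≤ q̂) ≤ k ≤ (n+1)(1-α) + 1`.
-/

open Finset

theorem List.le_getD_iff_countP_lt_le {α : Type*} [LinearOrder α] {l : List α}
    (hl : l.Pairwise (· ≤ ·)) {m : ℕ} (hm : m < l.length) (d x : α) :
    x ≤ l.getD m d ↔ l.countP (· < x) ≤ m := by
  induction l generalizing m with
  | nil => simp at hm
  | cons a t ih =>
    obtain ⟨ha, ht⟩ := List.pairwise_cons.1 hl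
    have hcount_t (hxa : x ≤ a) : t.countP (· < x) = 0 :=
      List.countP_eq_zero.2 fun y hy => by simpa using hxa.trans (ha y hy)
    rcases m with _ | m
    · simp only [List.getD_cons_zero, List.countP_cons, Nat.le_zero, Nat.add_eq_zero_iff]
      constructor
      · intro hxa
        simp [hcount_t hxa, hxa]
      · rintro ⟨-, h⟩
        simpa using h
    · simp only [List.getD_cons_succ, List.countP_cons, ih ht (by simpa using hm)]
      by_cases hax : a < x
      · simp [hax]
      · simp [hax, hcount_t (not_lt.1 hax)]

theorem List.countP_ofFn {α : Type*} {n : ℕ} (f : Fin n → α) (p : α → Bool) :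
    (List.ofFn f).countP p = #{i | p (f i)} := by
  induction n with
  | zero => simp
  | succ n ih =>
    rw [List.ofFn_succ, List.countP_cons, ih, Finset.card_filter, Finset.card_filter,
      Fin.sum_univ_succ]
    simp [add_comm]

theorem le_orderStat_iff {n : ℕ} (f : Fin n → ℝ) {k : ℕ} (hk : 1 ≤ k) (hkn : k ≤ n) (x : ℝ) :
    x ≤ orderStat f k ↔ #{i | f i < x} < k := by
  have hsorted := List.pairwise_insertionSort (· ≤ ·) (List.ofFn f)
  rw [orderStat, List.le_getD_iff_countP_lt_le hsorted (by rw [List.length_insertionSort, List.length_ofFn]; omega),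
    (List.perm_insertionSort _ _).countP_eq, List.countP_ofFn]
  simp only [decide_eq_true_eq]
  omega

def strictRank {ι β : Type*} [Fintype ι] [LinearOrder β] (g : ι → β) (i : ι) : ℕ :=
  #{j | g j < g i}

theorem le_orderStat_castSucc_iff_strictRank_lt {n : ℕ} (g : Fin (n + 1) → ℝ) {k : ℕ}
    (hk : 1 ≤ k) (hkn : k ≤ n) :
    g (Fin.last n) ≤ orderStat (fun i => g i.castSucc) k ↔ strictRank g (Fin.last n) < k := by
  rw [le_orderStat_iff _ hk hkn, strictRank, card_filter, card_filter, Fin.sum_univ_castSucc]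
  simp

theorem strictRank_comp_perm {ι β : Type*} [Fintype ι] [LinearOrder β] (g : ι → β)
    (σ : Equiv.Perm ι) (i : ι) : strictRank (g ∘ σ) i = strictRank g (σ i) := by
  rw [strictRank, strictRank, card_filter, card_filter]
  exact Fintype.sum_equiv σ _ _ fun j => by simp

theorem card_strictRank_lt_le {ι β : Type*} [Fintype ι] [LinearOrder β] {g : ι → β}
    (hg : Function.Injective g) (k : ℕ) : #{i | strictRank g i < k} ≤ k := by
  classical
  set T : Finset ι := {i | strictRank g i < k}
  rcases T.eq_empty_or_nonempty with hT | hT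
  · simp [hT]
  obtain ⟨i, hiT, hmax⟩ := T.exists_max_image g hT
  have hsub : T ⊆ insert i ({j | g j < g i} : Finset ι) := by
    intro j hj
    rcases (hmax j hj).lt_or_eq with hlt | heq
    · simp [hlt]
    · simp [hg heq]
  calc #T ≤ strictRank g i + 1 := (card_le_card hsub).trans (card_insert_le _ _)
    _ ≤ k := by simpa [T] using hiT

theorem measurable_strictRank {ι β : Type*} [Fintype ι] [LinearOrder β] [TopologicalSpace β]
    [OrderClosedTopology β] [SecondCountableTopology β] [MeasurableSpace β] [OpensMeasurableSpace β]
    (i : ι) : Measurable fun g : ι → β => strictRank g i := by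
  simp only [strictRank, card_filter]
  exact Finset.measurable_sum _ fun j _ =>
    Measurable.ite (measurableSet_lt (measurable_pi_apply j) (measurable_pi_apply i))
      measurable_const measurable_const

section

variable {Ω ι : Type*} [MeasurableSpace Ω] {μ : Measure Ω}

open scoped Classical in
theorem sum_measure_le_of_ae_card_le [Fintype ι] {A : ι → Set Ω} (hA : ∀ i, MeasurableSet (A i))
    {k : ℕ} (h : ∀ᵐ ω ∂μ, #{i | ω ∈ A i} ≤ k) : ∑ i, μ (A i) ≤ k * μ Set.univ := by
  calc ∑ i, μ (A i) = ∑ i, ∫⁻ ω, (A i).indicator 1 ω ∂μ := by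
        simp only [lintegral_indicator_one (hA _)]
    _ = ∫⁻ ω, ∑ i, (A i).indicator 1 ω ∂μ :=
        (lintegral_finsetSum _ fun i _ => measurable_one.indicator (hA i)).symm
    _ ≤ ∫⁻ _, (k : ENNReal) ∂μ := lintegral_mono_ae <| h.mono fun ω hω => by
        simpa [Set.indicator_apply, Finset.sum_boole] using hω
    _ = k * μ Set.univ := lintegral_const _

theorem ae_injective_of_measure_eq_zero {β : Type*} [Countable ι] {X : ι → Ω → β}
    (h : ∀ i j, i ≠ j → μ {ω | X i ω = X j ω} = 0) :
    ∀ᵐ ω ∂μ, Function.Injective fun i => X i ω := by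
  refine measure_mono_null (fun ω hω => ?_)
    (measure_iUnion_null fun i => measure_iUnion_null fun j => measure_iUnion_null (h i j))
  obtain ⟨i, j, heq, hne⟩ : ∃ i j, X i ω = X j ω ∧ i ≠ j := by
    simpa [Function.Injective] using hω
  exact Set.mem_iUnion₂.2 ⟨i, j, Set.mem_iUnion.2 ⟨hne, heq⟩⟩

variable [Fintype ι] {V : Ω → ι → ℝ}

theorem measure_strictRank_lt_eq (hV : Measurable V)
    (hexch : ∀ σ : Equiv.Perm ι, μ.map (fun ω => V ω ∘ σ) = μ.map V) (k : ℕ) (i j : ι) :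
    μ {ω | strictRank (V ω) i < k} = μ {ω | strictRank (V ω) j < k} := by
  classical
  set σ := Equiv.swap i j
  have hs : MeasurableSet {g : ι → ℝ | strictRank g j < k} :=
    measurable_strictRank j measurableSet_Iio
  have hVσ : Measurable fun ω => V ω ∘ σ :=
    measurable_pi_lambda _ fun l => (measurable_pi_apply (σ l)).comp hV
  calc μ {ω | strictRank (V ω) i < k}
      = μ ((fun ω => V ω ∘ σ) ⁻¹' {g | strictRank g j < k}) := by
        simp [strictRank_comp_perm, σ]
    _ = μ (V ⁻¹' {g | strictRank g j < k}) := by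
        rw [← Measure.map_apply hVσ hs, hexch, Measure.map_apply hV hs]

theorem card_mul_measure_strictRank_lt_le (hV : Measurable V)
    (hexch : ∀ σ : Equiv.Perm ι, μ.map (fun ω => V ω ∘ σ) = μ.map V)
    (hinj : ∀ᵐ ω ∂μ, Function.Injective (V ω)) (k : ℕ) (i : ι) :
    Fintype.card ι * μ {ω | strictRank (V ω) i < k} ≤ k * μ Set.univ := by
  calc Fintype.card ι * μ {ω | strictRank (V ω) i < k}
      = ∑ j, μ {ω | strictRank (V ω) j < k} := by
        simp [measure_strictRank_lt_eq hV hexch k _ i]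
    _ ≤ k * μ Set.univ :=
        sum_measure_le_of_ae_card_le (fun j => hV (measurable_strictRank j measurableSet_Iio))
          (hinj.mono fun ω hω => by simpa using card_strictRank_lt_le hω k)

end

theorem natCeil_mul_div_le_add_one_div {c x : ℝ} (hc : 0 < c) (hx : 0 ≤ x) :
    (⌈c * x⌉₊ : ℝ) / c ≤ x + 1 / c := by
  rw [div_le_iff₀ hc, add_mul, one_div_mul_cancel hc.ne']
  linarith [Nat.ceil_lt_add_one (mul_nonneg hc.le hx)]

theorem conformal_coverage_upper_bound_general
    {Ω : Type*} [MeasurableSpace Ω] (μ : Measure Ω) [IsProbabilityMeasure μ]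
    (n : ℕ) (S : Fin (n + 1) → Ω → ℝ)
    (hmeas : ∀ i, Measurable (S i))
    (hexch : ∀ σ : Equiv.Perm (Fin (n + 1)),
      Measure.map (fun ω => fun i => S (σ i) ω) μ =
      Measure.map (fun ω => fun i => S i ω) μ)
    (hdist : ∀ i j, i ≠ j → μ {ω | S i ω = S j ω} = 0)
    (α : ℝ) (hα : α ∈ Set.Ioo (0 : ℝ) 1)
    (hidx : ⌈((n : ℝ) + 1) * (1 - α)⌉₊ ≤ n) :
    (μ {ω | S (Fin.last n) ω ≤
        orderStat (fun i : Fin n => S i.castSucc ω)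
          ⌈((n : ℝ) + 1) * (1 - α)⌉₊}).toReal ≤ 1 - α + 1 / ((n : ℝ) + 1) := by
  set k := ⌈((n : ℝ) + 1) * (1 - α)⌉₊
  have hk : 1 ≤ k := Nat.one_le_ceil_iff.2 (mul_pos (by positivity) (by linarith [hα.2]))
  set V : Ω → Fin (n + 1) → ℝ := fun ω i => S i ω
  have hcover : {ω | S (Fin.last n) ω ≤ orderStat (fun i : Fin n => S i.castSucc ω) k} =
      {ω | strictRank (V ω) (Fin.last n) < k} :=
    Set.ext fun ω => le_orderStat_castSucc_iff_strictRank_lt (V ω) hk hidx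
  have hbound := card_mul_measure_strictRank_lt_le (measurable_pi_lambda _ hmeas) hexch
    (ae_injective_of_measure_eq_zero hdist) k (Fin.last n)
  rw [measure_univ, mul_one, Fintype.card_fin, ← hcover] at hbound
  have hreal := ENNReal.toReal_mono (by simp) hbound
  rw [ENNReal.toReal_mul, ENNReal.toReal_natCast, ENNReal.toReal_natCast] at hreal
  calc _ ≤ (k : ℝ) / ((n : ℝ) + 1) := by
        rw [le_div_iff₀ (by positivity)]
        push_cast at hreal
        linarith
    _ ≤ 1 - α + 1 / ((n : ℝ) + 1) :=
        natCeil_mul_div_le_add_one_div (by positivity) (by linarith [hα.2])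

/-- Upper bound on conformal coverage: for exchangeable, a.s. distinct
scores `S 0, ..., S n`, with `q̂` the `⌈(n+1)(1-α)⌉`-th smallest of the
first `n` scores, `P(S_{n+1} ≤ q̂) ≤ 1 - α + 1/(n+1)`. -/
theorem conformal_coverage_upper_bound
    {Ω : Type*} [MeasurableSpace Ω] (μ : Measure Ω) [IsProbabilityMeasure μ]
    (n : ℕ) (hn : 0 < n) (S : Fin (n + 1) → Ω → ℝ)
    (hmeas : ∀ i, Measurable (S i))
    (hexch : ∀ σ : Equiv.Perm (Fin (n + 1)),
      Measure.map (fun ω => fun i => S (σ i) ω) μ =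
      Measure.map (fun ω => fun i => S i ω) μ)
    (hdist : ∀ i j, i ≠ j → μ {ω | S i ω = S j ω} = 0)
    (α : ℝ) (hα : α ∈ Set.Ioo (0 : ℝ) 1)
    (hidx : ⌈((n : ℝ) + 1) * (1 - α)⌉₊ ≤ n) :
    (μ {ω | S (Fin.last n) ω ≤
        orderStat (fun i : Fin n => S i.castSucc ω)
          ⌈((n : ℝ) + 1) * (1 - α)⌉₊}).toReal ≤ 1 - α + 1 / ((n : ℝ) + 1) :=
  conformal_coverage_upper_bound_general μ n S hmeas hexch hdist α hα hidx
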